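/- Let 𝒢 be a groupoid and let R be an object unital 𝒢-graded ring with 1_{R_e} ≠ 0 for every object e. The following are equivalent: (i) R is an object skew groupoid ring, i.e. there exist an object crossed system (A, 𝒢, α, β) with A_e = R_e for every object e and with trivial β (β_{σ,τ} = 1_{A_{r(σ)}} for every composable pair (σ,τ)) and a bijective ring homomorphism γ : R → A ⋊^α_β 𝒢 with γ(R_σ) = (A ⋊^α_β 𝒢)_σ for every morphism σ; (ii) there exists a family (u_σ)_{σ∈𝒢} such that for every morphism σ, u_σ ∈ R_σ is object invertible, and u_σ u_τ = u_{στ} for every composable pair (σ,τ); that is, the degree map U^gr(R) → 𝒢 is surjective and splits as a homomorphism of groupoids. -/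

import Mathlib

open CategoryTheory

universe u v

/-- The type of all morphisms of a groupoid `𝒢`, bundled with their source and target. -/
abbrev Mor (𝒢 : Type u) [Groupoid 𝒢] : Type _ := Σ (e f : 𝒢), e ⟶ f

/-- A grading of a (not necessarily unital) ring `R` by a groupoid `𝒢`:
`R` is the internal direct sum of additive subgroups `grade σ`, one for each
morphism `σ`, with `R_σ R_τ ⊆ R_{στ}` for composable pairs (note that the paper's
product `στ`, requiring `d(σ) = r(τ)`, is `τ ≫ σ` in categorical notation), and
`R_σ R_τ = 0` for non-composable pairs. -/
structure GroupoidGrading (𝒢 : Type u) [Groupoid 𝒢] (R : Type v) [NonUnitalRing R] where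
  grade : ∀ ⦃e f : 𝒢⦄, (e ⟶ f) → AddSubgroup R
  decompose : ∀ r : R, ∃ (s : Finset (Mor 𝒢)) (c : Mor 𝒢 → R),
    (∀ σ : Mor 𝒢, c σ ∈ grade σ.2.2) ∧ r = ∑ σ ∈ s, c σ
  indep : ∀ (s : Finset (Mor 𝒢)) (c : Mor 𝒢 → R),
    (∀ σ : Mor 𝒢, c σ ∈ grade σ.2.2) → (∑ σ ∈ s, c σ) = 0 → ∀ σ ∈ s, c σ = 0
  mul_mem : ∀ ⦃a b c : 𝒢⦄ (σ : b ⟶ c) (τ : a ⟶ b),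
    ∀ x ∈ grade σ, ∀ y ∈ grade τ, x * y ∈ grade (τ ≫ σ)
  mul_eq_zero : ∀ ⦃a b b' c : 𝒢⦄ (σ : b ⟶ c) (τ : a ⟶ b'), b' ≠ b →
    ∀ x ∈ grade σ, ∀ y ∈ grade τ, x * y = 0

/-- Object unitality data for a groupoid graded ring: a family of local identities
`one e ∈ R_e` such that `1_{R_{r(σ)}} x = x 1_{R_{d(σ)}} = x` for every homogeneous
`x ∈ R_σ` (in particular each `R_e` is a unital ring with identity `one e`). -/
structure ObjectUnital {𝒢 : Type u} [Groupoid 𝒢] {R : Type v} [NonUnitalRing R]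
    (g : GroupoidGrading 𝒢 R) where
  one : 𝒢 → R
  one_mem : ∀ e : 𝒢, one e ∈ g.grade (𝟙 e)
  one_mul : ∀ ⦃e f : 𝒢⦄ (σ : e ⟶ f), ∀ x ∈ g.grade σ, one f * x = x
  mul_one : ∀ ⦃e f : 𝒢⦄ (σ : e ⟶ f), ∀ x ∈ g.grade σ, x * one e = x
/-- An object crossed system `(A, 𝒢, α, β)`: a family of nonzero unital rings `A e`
indexed by the objects of `𝒢`, a weak action `α` assigning to each morphism
`σ : e ⟶ f` (so `d(σ) = e`, `r(σ) = f`) a ring isomorphism `α σ : A e ≃+* A f` with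
`α (𝟙 e) = id`, and an `α`-cocycle `β` assigning to each composable pair (in the paper's
notation `β_{σ,τ}` for `d(σ) = r(τ)`, i.e. `τ : a ⟶ b`, `σ : b ⟶ c`) a unit of `A c`. -/
structure ObjectCrossedSystem (𝒢 : Type u) [Groupoid 𝒢]
    (A : 𝒢 → Type v) [∀ e, Ring (A e)] where
  nontriv : ∀ e : 𝒢, (0 : A e) ≠ 1
  α : ∀ ⦃e f : 𝒢⦄, (e ⟶ f) → (A e ≃+* A f)
  α_id : ∀ e : 𝒢, α (𝟙 e) = RingEquiv.refl (A e)
  β : ∀ ⦃a b c : 𝒢⦄, (b ⟶ c) → (a ⟶ b) → (A c)ˣ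
  β_id_right : ∀ ⦃b c : 𝒢⦄ (σ : b ⟶ c), β σ (𝟙 b) = 1
  β_id_left : ∀ ⦃b c : 𝒢⦄ (σ : b ⟶ c), β (𝟙 c) σ = 1
  α_α : ∀ ⦃a b c : 𝒢⦄ (σ : b ⟶ c) (τ : a ⟶ b) (x : A a),
    α σ (α τ x) = (β σ τ : A c) * α (τ ≫ σ) x * (((β σ τ)⁻¹ : (A c)ˣ) : A c)
  cocycle : ∀ ⦃a b c d : 𝒢⦄ (σ : c ⟶ d) (τ : b ⟶ c) (ρ : a ⟶ b),
    (β σ τ : A d) * (β (τ ≫ σ) ρ : A d) = α σ (β τ ρ : A c) * (β σ (ρ ≫ τ) : A d)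

/-- The underlying additive group of the crossed product `A ⋊^α_β 𝒢`: finitely supported
families `(a_σ)` indexed by the morphisms of `𝒢` with `a_σ ∈ A_{r(σ)}`; the element
`a u_σ` is `uElt σ a` below. -/
abbrev CrossedProd (𝒢 : Type u) [Groupoid 𝒢] (A : 𝒢 → Type v) [∀ e, AddCommGroup (A e)] :=
  Π₀ σ : Mor 𝒢, A σ.2.1

open Classical in
/-- The element `a u_σ` of the crossed product. -/
noncomputable def uElt {𝒢 : Type u} [Groupoid 𝒢] {A : 𝒢 → Type v} [∀ e, AddCommGroup (A e)]
    {e f : 𝒢} (σ : e ⟶ f) (a : A f) : CrossedProd 𝒢 A :=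
  DFinsupp.single (⟨e, f, σ⟩ : Mor 𝒢) a

/-- The element `1_{A_e} u_e` of the crossed product. -/
noncomputable def cpOne {𝒢 : Type u} [Groupoid 𝒢] (A : 𝒢 → Type v) [∀ e, Ring (A e)]
    (e : 𝒢) : CrossedProd 𝒢 A :=
  uElt (𝟙 e) (1 : A e)

open Classical in
/-- The product of the crossed product `A ⋊^α_β 𝒢`, determined biadditively by
`(a u_σ)(b u_τ) = a α_σ(b) β_{σ,τ} u_{στ}` for composable `(σ,τ)` (i.e. `d(σ) = r(τ)`;
 in categorical notation `στ = τ ≫ σ`) and `(a u_σ)(b u_τ) = 0` otherwise. -/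
noncomputable def cpMul {𝒢 : Type u} [Groupoid 𝒢] {A : 𝒢 → Type v} [∀ e, Ring (A e)]
    (S : ObjectCrossedSystem 𝒢 A) (x y : CrossedProd 𝒢 A) : CrossedProd 𝒢 A :=
  x.sum fun σ a => y.sum fun τ b =>
    if h : τ.2.1 = σ.1 then
      uElt ((τ.2.2 ≫ eqToHom h) ≫ σ.2.2)
        (a * S.α σ.2.2 (cast (congrArg A h) b) * (S.β σ.2.2 (τ.2.2 ≫ eqToHom h) : A σ.2.1))
    else 0
/-- The principal component `R_e = R_{𝟙 e}` of an object unital groupoid graded ring,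
as a type. -/
def GradePiece {𝒢 : Type u} [Groupoid 𝒢] {R : Type v} [NonUnitalRing R]
    (g : GroupoidGrading 𝒢 R) (U : ObjectUnital g) (e : 𝒢) : Type v :=
  ↥(g.grade (𝟙 e))

/-- The underlying element of `R` of an element of `R_e`. -/
def GradePiece.val {𝒢 : Type u} [Groupoid 𝒢] {R : Type v} [NonUnitalRing R]
    {g : GroupoidGrading 𝒢 R} {U : ObjectUnital g} {e : 𝒢}
    (x : GradePiece g U e) : R :=
  Subtype.val (show ↥(g.grade (𝟙 e)) from x)

/-- Each principal component `R_e` of an object unital groupoid graded ring is a unital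
ring, with multiplication inherited from `R` and identity `1_{R_e}`. -/
instance GradePiece.instRing {𝒢 : Type u} [Groupoid 𝒢] {R : Type v} [NonUnitalRing R]
    (g : GroupoidGrading 𝒢 R) (U : ObjectUnital g) (e : 𝒢) :
    Ring (GradePiece g U e) :=
  letI ac : AddCommGroup (GradePiece g U e) :=
    (inferInstance : AddCommGroup (g.grade (𝟙 e)))
  letI mul : Mul (GradePiece g U e) :=
    ⟨fun x y => ⟨GradePiece.val x * GradePiece.val y, by
      have h := g.mul_mem (𝟙 e) (𝟙 e) (GradePiece.val x)
        (show ↥(g.grade (𝟙 e)) from x).2 (GradePiece.val y)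
        (show ↥(g.grade (𝟙 e)) from y).2
      simpa using h⟩⟩
  { ac, mul with
    one := show ↥(g.grade (𝟙 e)) from ⟨U.one e, U.one_mem e⟩
    mul_assoc := fun a b c => Subtype.ext (mul_assoc (GradePiece.val a)
      (GradePiece.val b) (GradePiece.val c))
    one_mul := fun a => Subtype.ext (U.one_mul (𝟙 e) (GradePiece.val a)
      (show ↥(g.grade (𝟙 e)) from a).2)
    mul_one := fun a => Subtype.ext (U.mul_one (𝟙 e) (GradePiece.val a)
      (show ↥(g.grade (𝟙 e)) from a).2)
    left_distrib := fun a b c => Subtype.ext (left_distrib (GradePiece.val a)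
      (GradePiece.val b) (GradePiece.val c))
    right_distrib := fun a b c => Subtype.ext (right_distrib (GradePiece.val a)
      (GradePiece.val b) (GradePiece.val c))
    zero_mul := fun a => Subtype.ext (zero_mul (GradePiece.val a))
    mul_zero := fun a => Subtype.ext (mul_zero (GradePiece.val a)) }

/-!
Given a splitting `σ ↦ u_σ`, conjugation by `u_σ` is a ring isomorphism `R_{d(σ)} → R_{r(σ)}`,
and multiplicativity of `u` makes these conjugations an honest action, so they form an object
crossed system with trivial cocycle. Every `x ∈ R_σ` factors uniquely as `(x u_σ⁻¹) u_σ` with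
`x u_σ⁻¹ ∈ R_{r(σ)}`, so `a u_σ ↦ a · u_σ` is a graded isomorphism from the skew groupoid ring
onto `R`. Conversely, if `β` is trivial then `(1 u_σ)(1 u_τ) = 1 u_{στ}` in the crossed product,
so the preimages of the elements `1 u_σ` form a splitting.
-/

namespace GradePiece

variable {𝒢 : Type u} [Groupoid 𝒢] {R : Type v} [NonUnitalRing R]
  {g : GroupoidGrading 𝒢 R} {U : ObjectUnital g} {e : 𝒢}

lemma val_mem (x : GradePiece g U e) : x.val ∈ g.grade (𝟙 e) :=
  (show ↥(g.grade (𝟙 e)) from x).2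

def mk (U : ObjectUnital g) (x : R) (hx : x ∈ g.grade (𝟙 e)) : GradePiece g U e := ⟨x, hx⟩

lemma val_injective : Function.Injective (GradePiece.val : GradePiece g U e → R) :=
  Subtype.val_injective

@[simp] lemma val_zero : (0 : GradePiece g U e).val = 0 := rfl

@[simp] lemma val_one : (1 : GradePiece g U e).val = U.one e := rfl

@[simp] lemma val_add (x y : GradePiece g U e) : (x + y).val = x.val + y.val := rfl

@[simp] lemma val_mul (x y : GradePiece g U e) : (x * y).val = x.val * y.val := rfl

end GradePiece

section CrossedProduct

variable {𝒢 : Type u} [Groupoid 𝒢] {A : 𝒢 → Type v} [∀ e, Ring (A e)]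
  (S : ObjectCrossedSystem 𝒢 A)

lemma uElt_zero {e f : 𝒢} (σ : e ⟶ f) : uElt σ (0 : A f) = 0 := by
  classical
  exact DFinsupp.single_zero _

lemma uElt_add {e f : 𝒢} (σ : e ⟶ f) (a b : A f) : uElt σ (a + b) = uElt σ a + uElt σ b := by
  classical
  exact DFinsupp.single_add _ _ _

lemma cpMul_uElt_uElt {a b c : 𝒢} (σ : b ⟶ c) (τ : a ⟶ b) (x : A c) (y : A b) :
    cpMul S (uElt σ x) (uElt τ y) = uElt (τ ≫ σ) (x * S.α σ y * (S.β σ τ : A c)) := by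
  classical
  unfold cpMul
  rw [uElt, uElt, DFinsupp.sum_single_index, DFinsupp.sum_single_index]
  · simp
  · simp [uElt_zero]
  · rw [DFinsupp.sum_single_index] <;> simp [uElt_zero]

lemma cpMul_uElt_uElt_of_ne {a b b' c : 𝒢} (σ : b ⟶ c) (τ : a ⟶ b') (h : b' ≠ b)
    (x : A c) (y : A b') :
    cpMul S (uElt σ x) (uElt τ y) = 0 := by
  classical
  unfold cpMul
  rw [uElt, uElt, DFinsupp.sum_single_index, DFinsupp.sum_single_index] <;> simp [h, uElt_zero]

lemma zero_cpMul (y : CrossedProd 𝒢 A) : cpMul S 0 y = 0 := by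
  classical
  exact DFinsupp.sum_zero_index

lemma add_cpMul (x x' y : CrossedProd 𝒢 A) :
    cpMul S (x + x') y = cpMul S x y + cpMul S x' y := by
  classical
  unfold cpMul
  refine DFinsupp.sum_add_index (fun σ => ?_) (fun σ a a' => ?_)
  · simp [uElt_zero]
  · rw [← DFinsupp.sum_add]
    congr 1
    ext τ b
    split_ifs <;> simp [add_mul, uElt_add]

lemma cpMul_zero (x : CrossedProd 𝒢 A) : cpMul S x 0 = 0 := by
  classical
  simp only [cpMul, DFinsupp.sum_zero_index, DFinsupp.sum_zero]

lemma cpMul_add (x y y' : CrossedProd 𝒢 A) :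
    cpMul S x (y + y') = cpMul S x y + cpMul S x y' := by
  classical
  unfold cpMul
  refine (Finset.sum_congr rfl fun σ _ => ?_).trans DFinsupp.sum_add
  obtain ⟨e', f', σ⟩ := σ
  refine DFinsupp.sum_add_index (fun τ => ?_) (fun τ b b' => ?_) <;>
    obtain ⟨e, f, τ⟩ := τ <;> dsimp only at * <;> split_ifs with h
  · subst h
    simp [uElt_zero]
  · rfl
  · subst h
    simp [mul_add, add_mul, uElt_add]
  · simp

end CrossedProduct

section Splitting

variable {𝒢 : Type u} [Groupoid 𝒢] {R : Type v} [NonUnitalRing R]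

/-- A splitting `σ ↦ u_σ` of the degree map `U^gr(R) → 𝒢` by a groupoid homomorphism;
object invertibility of each `u_σ` follows (`mul_inv`, `inv_mul`). -/
structure DegreeSplitting (g : GroupoidGrading 𝒢 R) (U : ObjectUnital g) where
  u : ∀ ⦃e f : 𝒢⦄, (e ⟶ f) → R
  mem : ∀ ⦃e f : 𝒢⦄ (σ : e ⟶ f), u σ ∈ g.grade σ
  mul : ∀ ⦃a b c : 𝒢⦄ (σ : b ⟶ c) (τ : a ⟶ b), u σ * u τ = u (τ ≫ σ)
  id : ∀ e : 𝒢, u (𝟙 e) = U.one e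

namespace DegreeSplitting

variable {g : GroupoidGrading 𝒢 R} {U : ObjectUnital g} (s : DegreeSplitting g U)

lemma mul_inv {e f : 𝒢} (σ : e ⟶ f) : s.u σ * s.u (Groupoid.inv σ) = U.one f := by
  rw [s.mul, Groupoid.inv_comp, s.id]

lemma inv_mul {e f : 𝒢} (σ : e ⟶ f) : s.u (Groupoid.inv σ) * s.u σ = U.one e := by
  rw [s.mul, Groupoid.comp_inv, s.id]

/-- The identity law is forced: an object invertible idempotent is the local identity. -/
def ofObjectInvertible (u : ∀ ⦃e f : 𝒢⦄, (e ⟶ f) → R)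
    (hu : ∀ ⦃e f : 𝒢⦄ (σ : e ⟶ f), u σ ∈ g.grade σ ∧
      ∃ t ∈ g.grade (Groupoid.inv σ), u σ * t = U.one f ∧ t * u σ = U.one e)
    (hmul : ∀ ⦃a b c : 𝒢⦄ (σ : b ⟶ c) (τ : a ⟶ b), u σ * u τ = u (τ ≫ σ)) :
    DegreeSplitting g U where
  u := u
  mem _ _ σ := (hu σ).1
  mul := hmul
  id e := by
    obtain ⟨t, -, ht, -⟩ := (hu (𝟙 e)).2
    calc u (𝟙 e) = u (𝟙 e) * (u (𝟙 e) * t) := by rw [ht, U.mul_one _ _ (hu _).1]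
      _ = U.one e := by rw [← mul_assoc, hmul, Category.comp_id, ht]

lemma conj_mem {e f : 𝒢} (σ : e ⟶ f) {x : R} (hx : x ∈ g.grade (𝟙 e)) :
    s.u σ * x * s.u (Groupoid.inv σ) ∈ g.grade (𝟙 f) := by
  have hσx : s.u σ * x ∈ g.grade σ := by
    simpa using g.mul_mem σ (𝟙 e) _ (s.mem σ) x hx
  simpa using g.mul_mem σ (Groupoid.inv σ) _ hσx _ (s.mem (Groupoid.inv σ))

def conjFun {e f : 𝒢} (σ : e ⟶ f) (a : GradePiece g U e) : GradePiece g U f :=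
  .mk U (s.u σ * a.val * s.u (Groupoid.inv σ)) (s.conj_mem σ a.val_mem)

lemma val_conjFun {e f : 𝒢} (σ : e ⟶ f) (a : GradePiece g U e) :
    (s.conjFun σ a).val = s.u σ * a.val * s.u (Groupoid.inv σ) := rfl

lemma conjFun_id {e : 𝒢} (a : GradePiece g U e) : s.conjFun (𝟙 e) a = a := by
  apply GradePiece.val_injective
  rw [val_conjFun, Groupoid.inv_eq_inv, IsIso.inv_id, s.id, U.one_mul _ _ a.val_mem,
    U.mul_one _ _ a.val_mem]

lemma conjFun_conjFun {a b c : 𝒢} (σ : b ⟶ c) (τ : a ⟶ b) (x : GradePiece g U a) :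
    s.conjFun σ (s.conjFun τ x) = s.conjFun (τ ≫ σ) x := by
  apply GradePiece.val_injective
  have hinv : Groupoid.inv (τ ≫ σ) = Groupoid.inv σ ≫ Groupoid.inv τ := by
    simp only [Groupoid.inv_eq_inv, IsIso.inv_comp]
  simp only [val_conjFun, hinv, ← s.mul, mul_assoc]

lemma conjFun_mul {e f : 𝒢} (σ : e ⟶ f) (a b : GradePiece g U e) :
    s.conjFun σ (a * b) = s.conjFun σ a * s.conjFun σ b := by
  apply GradePiece.val_injective
  simp only [val_conjFun, GradePiece.val_mul, mul_assoc]
  rw [← mul_assoc (s.u (Groupoid.inv σ)), s.inv_mul, ← mul_assoc a.val (U.one e),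
    U.mul_one _ _ a.val_mem]

def conj {e f : 𝒢} (σ : e ⟶ f) : GradePiece g U e ≃+* GradePiece g U f where
  toFun := s.conjFun σ
  invFun := s.conjFun (Groupoid.inv σ)
  left_inv a := by rw [conjFun_conjFun, Groupoid.comp_inv, conjFun_id]
  right_inv a := by rw [conjFun_conjFun, Groupoid.inv_comp, conjFun_id]
  map_mul' := s.conjFun_mul σ
  map_add' a b := GradePiece.val_injective (by simp [val_conjFun, mul_add, add_mul])

def crossedSystem (hne : ∀ e : 𝒢, U.one e ≠ 0) : ObjectCrossedSystem 𝒢 (GradePiece g U) where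
  nontriv e h := hne e (by simpa using congrArg GradePiece.val h.symm)
  α _ _ σ := s.conj σ
  α_id _ := RingEquiv.ext s.conjFun_id
  β _ _ _ _ _ := 1
  β_id_right _ _ _ := rfl
  β_id_left _ _ _ := rfl
  α_α _ _ _ σ τ x := by
    simp only [Units.val_one, inv_one, one_mul, mul_one]
    exact s.conjFun_conjFun σ τ x
  cocycle _ _ _ := by simp

open Classical in
noncomputable def lift : CrossedProd 𝒢 (GradePiece g U) →+ R :=
  DFinsupp.sumAddHom fun σ =>
    { toFun := fun a => a.val * s.u σ.2.2
      map_zero' := zero_mul _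
      map_add' := fun a b => add_mul a.val b.val _ }

lemma lift_uElt {e f : 𝒢} (σ : e ⟶ f) (a : GradePiece g U f) :
    s.lift (uElt σ a) = a.val * s.u σ := by
  classical
  exact DFinsupp.sumAddHom_single _ _ _

lemma val_mul_mem {e f : 𝒢} (σ : e ⟶ f) (a : GradePiece g U f) :
    a.val * s.u σ ∈ g.grade σ := by
  simpa using g.mul_mem (𝟙 f) σ _ a.val_mem _ (s.mem σ)

lemma mul_inv_mem {e f : 𝒢} (σ : e ⟶ f) {x : R} (hx : x ∈ g.grade σ) :
    x * s.u (Groupoid.inv σ) ∈ g.grade (𝟙 f) := by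
  simpa using g.mul_mem σ (Groupoid.inv σ) x hx _ (s.mem _)

lemma lift_injective : Function.Injective s.lift := by
  classical
  refine (injective_iff_map_eq_zero s.lift).mpr fun z hz => ?_
  have hsum : ∑ σ ∈ z.support, (z σ).val * s.u σ.2.2 = 0 := by
    rw [← hz, lift, DFinsupp.sumAddHom_apply]
    rfl
  have hterms := g.indep z.support _ (fun σ => s.val_mul_mem σ.2.2 (z σ)) hsum
  ext σ
  by_cases hσ : σ ∈ z.support
  · apply GradePiece.val_injective
    calc (z σ).val = (z σ).val * s.u σ.2.2 * s.u (Groupoid.inv σ.2.2) := by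
          rw [mul_assoc, s.mul_inv, U.mul_one _ _ (z σ).val_mem]
      _ = 0 := by rw [hterms σ hσ, zero_mul]
  · exact DFinsupp.notMem_support_iff.mp hσ

lemma lift_uElt_mul_inv {e f : 𝒢} (σ : e ⟶ f) {x : R} (hx : x ∈ g.grade σ) :
    s.lift (uElt σ (.mk U _ (s.mul_inv_mem σ hx))) = x := by
  rw [lift_uElt]
  exact (mul_assoc _ _ _).trans (by rw [s.inv_mul, U.mul_one σ x hx])

lemma lift_surjective : Function.Surjective s.lift := by
  intro r
  obtain ⟨t, c, hc, rfl⟩ := g.decompose r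
  refine ⟨∑ σ ∈ t, uElt σ.2.2 (.mk U _ (s.mul_inv_mem σ.2.2 (hc σ))), ?_⟩
  rw [map_sum]
  exact Finset.sum_congr rfl fun σ _ => s.lift_uElt_mul_inv σ.2.2 (hc σ)

lemma lift_image_range (σ : Mor 𝒢) :
    s.lift '' Set.range (fun a : GradePiece g U σ.2.1 => uElt σ.2.2 a) = g.grade σ.2.2 := by
  ext x
  constructor
  · rintro ⟨-, ⟨a, rfl⟩, rfl⟩
    rw [lift_uElt]
    exact s.val_mul_mem σ.2.2 a
  · exact fun hx => ⟨_, ⟨_, rfl⟩, s.lift_uElt_mul_inv σ.2.2 hx⟩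

lemma lift_cpMul_uElt_uElt (hne : ∀ e : 𝒢, U.one e ≠ 0) {a b b' c : 𝒢} (σ : b ⟶ c)
    (τ : a ⟶ b') (x : GradePiece g U c) (y : GradePiece g U b') :
    s.lift (cpMul (s.crossedSystem hne) (uElt σ x) (uElt τ y)) =
      s.lift (uElt σ x) * s.lift (uElt τ y) := by
  rw [lift_uElt, lift_uElt]
  by_cases h : b' = b
  · subst h
    rw [cpMul_uElt_uElt, lift_uElt]
    change (x * s.conjFun σ y * 1).val * s.u (τ ≫ σ) = _
    rw [mul_one, GradePiece.val_mul, val_conjFun, ← s.mul σ τ]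
    calc x.val * (s.u σ * y.val * s.u (Groupoid.inv σ)) * (s.u σ * s.u τ)
        = x.val * s.u σ * (y.val * (s.u (Groupoid.inv σ) * s.u σ) * s.u τ) := by
          simp only [mul_assoc]
      _ = x.val * s.u σ * (y.val * s.u τ) := by rw [s.inv_mul, U.mul_one _ _ y.val_mem]
  · rw [cpMul_uElt_uElt_of_ne _ σ τ h, map_zero,
      g.mul_eq_zero σ τ h _ (s.val_mul_mem σ x) _ (s.val_mul_mem τ y)]

lemma lift_cpMul (hne : ∀ e : 𝒢, U.one e ≠ 0) (x y : CrossedProd 𝒢 (GradePiece g U)) :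
    s.lift (cpMul (s.crossedSystem hne) x y) = s.lift x * s.lift y := by
  classical
  induction x using DFinsupp.induction with
  | h0 => rw [zero_cpMul, map_zero, zero_mul]
  | ha σ a x _ _ ihx =>
    rw [add_cpMul, map_add, map_add, add_mul, ihx]
    congr 1
    clear ihx
    induction y using DFinsupp.induction with
    | h0 => rw [cpMul_zero, map_zero, mul_zero]
    | ha τ b y _ _ ihy =>
      rw [cpMul_add, map_add, map_add, mul_add, ihy]
      exact congrArg (· + _) (s.lift_cpMul_uElt_uElt hne σ.2.2 τ.2.2 a b)

noncomputable def toCrossedProd : R ≃+ CrossedProd 𝒢 (GradePiece g U) :=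
  (AddEquiv.ofBijective s.lift ⟨s.lift_injective, s.lift_surjective⟩).symm

lemma lift_toCrossedProd (x : R) : s.lift (s.toCrossedProd x) = x :=
  (AddEquiv.ofBijective s.lift _).apply_symm_apply x

lemma toCrossedProd_mul (hne : ∀ e : 𝒢, U.one e ≠ 0) (x y : R) :
    s.toCrossedProd (x * y) =
      cpMul (s.crossedSystem hne) (s.toCrossedProd x) (s.toCrossedProd y) :=
  s.lift_injective (by rw [lift_cpMul, lift_toCrossedProd, lift_toCrossedProd, lift_toCrossedProd])

lemma image_toCrossedProd_grade (σ : Mor 𝒢) :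
    s.toCrossedProd '' g.grade σ.2.2 =
      Set.range fun a : GradePiece g U σ.2.1 => uElt σ.2.2 a := by
  rw [← s.lift_image_range σ, ← Set.image_comp]
  convert Set.image_id _
  exact funext fun z => s.lift_injective (s.lift_toCrossedProd _)

section OfCrossedProduct

variable (S : ObjectCrossedSystem 𝒢 (GradePiece g U))
  (hβ : ∀ ⦃a b c : 𝒢⦄ (σ : b ⟶ c) (τ : a ⟶ b), S.β σ τ = 1)
  (γ : R ≃+ CrossedProd 𝒢 (GradePiece g U))
  (hγ : ∀ x y : R, γ (x * y) = cpMul S (γ x) (γ y))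
  (himg : ∀ σ : Mor 𝒢, γ '' (g.grade σ.2.2) =
    Set.range (fun a : GradePiece g U σ.2.1 => uElt σ.2.2 a))

include himg in
lemma symm_uElt_mem {e f : 𝒢} (σ : e ⟶ f) (a : GradePiece g U f) :
    γ.symm (uElt σ a) ∈ g.grade σ := by
  have h : uElt σ a ∈ γ '' g.grade σ := (himg ⟨e, f, σ⟩).ge ⟨a, rfl⟩
  rwa [← AddEquiv.coe_toEquiv, Equiv.image_eq_preimage_symm] at h

include hβ hγ in
lemma symm_uElt_one_mul {a b c : 𝒢} (σ : b ⟶ c) (τ : a ⟶ b) :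
    γ.symm (uElt σ 1) * γ.symm (uElt τ 1) = γ.symm (uElt (τ ≫ σ) 1) :=
  γ.injective (by simp [hγ, cpMul_uElt_uElt, hβ])

include hβ hγ himg in
lemma symm_uElt_id (f : 𝒢) : γ.symm (uElt (𝟙 f) 1) = U.one f := by
  obtain ⟨a, ha⟩ : γ (U.one f) ∈ Set.range fun a : GradePiece g U f => uElt (𝟙 f) a :=
    himg ⟨f, f, 𝟙 f⟩ ▸ Set.mem_image_of_mem γ (U.one_mem f)
  calc γ.symm (uElt (𝟙 f) 1) = U.one f * γ.symm (uElt (𝟙 f) 1) :=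
        (U.one_mul _ _ (symm_uElt_mem γ himg _ _)).symm
    _ = U.one f := γ.injective (by simp [hγ, ← ha, cpMul_uElt_uElt, hβ])

noncomputable def ofCrossedProduct : DegreeSplitting g U where
  u _ f σ := γ.symm (uElt σ (1 : GradePiece g U f))
  mem _ _ σ := symm_uElt_mem γ himg σ 1
  mul _ _ _ := symm_uElt_one_mul S hβ γ hγ
  id := symm_uElt_id S hβ γ hγ himg

end OfCrossedProduct

end DegreeSplitting

end Splitting

/-- An object unital `𝒢`-graded ring `R` (with nonzero local identities)
is an object skew groupoid ring — i.e. graded isomorphic to the crossed product of an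
object crossed system with `A_e = R_e` and trivial cocycle `β` — iff the degree map
`U^gr(R) → 𝒢` is surjective and splits as a homomorphism of groupoids, i.e. there is a
family `(u_σ)` of object invertible elements `u_σ ∈ R_σ` with `u_σ u_τ = u_{στ}` for all
composable pairs. -/
theorem stmt9 {𝒢 : Type u} [Groupoid 𝒢] {R : Type v} [NonUnitalRing R]
    (g : GroupoidGrading 𝒢 R) (U : ObjectUnital g) (hne : ∀ e : 𝒢, U.one e ≠ 0) :
    (∃ (S : ObjectCrossedSystem 𝒢 (GradePiece g U)),
      (∀ ⦃a b c : 𝒢⦄ (σ : b ⟶ c) (τ : a ⟶ b), S.β σ τ = 1) ∧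
      ∃ γ : R → CrossedProd 𝒢 (GradePiece g U),
        Function.Bijective γ ∧
        (∀ x y : R, γ (x + y) = γ x + γ y) ∧
        (∀ x y : R, γ (x * y) = cpMul S (γ x) (γ y)) ∧
        (∀ σ : Mor 𝒢, γ '' (g.grade σ.2.2) =
          Set.range (fun a : GradePiece g U σ.2.1 => uElt σ.2.2 a))) ↔
    (∃ uu : ∀ ⦃e f : 𝒢⦄, (e ⟶ f) → R,
      (∀ ⦃e f : 𝒢⦄ (σ : e ⟶ f), uu σ ∈ g.grade σ ∧
        ∃ s ∈ g.grade (Groupoid.inv σ), uu σ * s = U.one f ∧ s * uu σ = U.one e) ∧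
      (∀ ⦃a b c : 𝒢⦄ (σ : b ⟶ c) (τ : a ⟶ b), uu σ * uu τ = uu (τ ≫ σ))) := by
  constructor
  · rintro ⟨S, hβ, γ, hbij, hadd, hγ, himg⟩
    let s := DegreeSplitting.ofCrossedProduct S hβ
      (AddEquiv.mk' (Equiv.ofBijective γ hbij) hadd) hγ himg
    exact ⟨s.u, fun _ _ σ => ⟨s.mem σ, s.u (Groupoid.inv σ), s.mem _, s.mul_inv σ, s.inv_mul σ⟩,
      s.mul⟩
  · rintro ⟨u, hu, hmul⟩
    let s := DegreeSplitting.ofObjectInvertible u hu hmul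
    exact ⟨s.crossedSystem hne, fun _ _ _ _ _ => rfl, s.toCrossedProd, s.toCrossedProd.bijective,
      map_add _, s.toCrossedProd_mul hne, s.image_toCrossedProd_grade⟩
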